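/- Let Φ be a root system of type E₆ with longest element w₀ and diagram involution π₀ (defined by w₀α_i = −α_{π₀(i)}), and let σ: V → V be the linear involution with σ(α_i) = α_{π₀(i)} for all i. If β₁, β₂, β₃, β₄ are mutually orthogonal positive roots each fixed by σ, then s_{β₁}s_{β₂}s_{β₃}s_{β₄} = w₀. -/

import Mathlib

open scoped RealInnerProductSpace Pointwise

namespace Paper

variable {V : Type*} [NormedAddCommGroup V] [InnerProductSpace ℝ V]

/-- The orthogonal reflection in the hyperplane perpendicular to `α`
(by convention the identity if `α = 0`). -/
noncomputable def sref (α : V) : V ≃ₗ[ℝ] V :=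
  letI := Classical.propDecidable (α = 0)
  if h : α = 0 then LinearEquiv.refl ℝ V
  else
    Module.reflection (x := α) (f := (2 / ⟪α, α⟫) • (innerₛₗ ℝ α)) <| by
      have h' : ⟪α, α⟫ ≠ 0 := inner_self_ne_zero.mpr h
      have h2 : ((2 / ⟪α, α⟫) • (innerₛₗ ℝ α)) α = (2 / ⟪α, α⟫) * ⟪α, α⟫ := by
        simp
      rw [h2, div_mul_cancel₀ _ h']

/-- `Φ` is a (finite, reduced, crystallographic) root system in the real inner
product space `V`. -/
structure IsRootSystem (Φ : Set V) : Prop where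
  finite : Φ.Finite
  nonzero : (0 : V) ∉ Φ
  span_top : Submodule.span ℝ Φ = ⊤
  neg_mem : ∀ α ∈ Φ, -α ∈ Φ
  refl_mem : ∀ α ∈ Φ, ∀ β ∈ Φ, sref α β ∈ Φ
  crystallographic : ∀ α ∈ Φ, ∀ β ∈ Φ, ∃ m : ℤ, 2 * ⟪α, β⟫ / ⟪β, β⟫ = (m : ℝ)
  reduced : ∀ α ∈ Φ, ∀ t : ℝ, t • α ∈ Φ → t = 1 ∨ t = -1

/-- Irreducibility of a root system. -/
def IsIrreducible (Φ : Set V) : Prop :=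
  ∀ Φ₁ Φ₂ : Set V, Φ = Φ₁ ∪ Φ₂ → (∀ α ∈ Φ₁, ∀ β ∈ Φ₂, ⟪α, β⟫ = 0) →
    Φ₁ = ∅ ∨ Φ₂ = ∅

/-- `αs` is a system of simple roots for `Φ`, with corresponding set `Pos` of
positive roots. -/
structure IsBase {n : ℕ} (Φ : Set V) (αs : Fin n → V) (Pos : Set V) : Prop where
  mem : ∀ i, αs i ∈ Φ
  indep : LinearIndependent ℝ αs
  span_eq : Submodule.span ℝ (Set.range αs) = ⊤
  pos_subset : Pos ⊆ Φ
  mem_pos_iff : ∀ β ∈ Φ, (β ∈ Pos ↔ ∃ c : Fin n → ℕ, β = ∑ i, (c i : ℝ) • αs i)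
  pos_or_neg : ∀ β ∈ Φ, β ∈ Pos ∨ -β ∈ Pos

/-- The Weyl group of `Φ`: the subgroup of `GL(V)` generated by the reflections
in the roots. -/
noncomputable def weylGroup (Φ : Set V) : Subgroup (V ≃ₗ[ℝ] V) :=
  Subgroup.closure (sref '' Φ)

/-- The standard parabolic subgroup generated by the simple reflections `sref (αs i)`
for `i ∈ J`. -/
noncomputable def parab {n : ℕ} (αs : Fin n → V) (J : Set (Fin n)) :
    Subgroup (V ≃ₗ[ℝ] V) :=
  Subgroup.closure ((fun i => sref (αs i)) '' J)

/-- The inversion set `Φ(w) = {β ∈ Φ⁺ : w⁻¹ β ∈ −Φ⁺}`. -/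
def invSet (Pos : Set V) (w : V ≃ₗ[ℝ] V) : Set V :=
  {β ∈ Pos | -(w⁻¹ β) ∈ Pos}

/-- The length of a Weyl group element, as the number of inversions. -/
noncomputable def len (Pos : Set V) (w : V ≃ₗ[ℝ] V) : ℕ :=
  (invSet Pos w).ncard

/-- `φ` is the highest root of the positive system `Pos` with simple roots `αs`. -/
def IsHighestRoot {n : ℕ} (αs : Fin n → V) (Pos : Set V) (φ : V) : Prop :=
  φ ∈ Pos ∧ ∀ β ∈ Pos, ∃ c : Fin n → ℕ, φ - β = ∑ i, (c i : ℝ) • αs i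

/-- Adjacency in the Bourbaki-labelled Dynkin diagram of the `E`-series (nodes `1,…,8`). -/
def eAdj (i j : ℕ) : Prop :=
  (i, j) ∈ ([(1,3),(3,1),(3,4),(4,3),(4,5),(5,4),(5,6),(6,5),(6,7),(7,6),(7,8),(8,7),(2,4),(4,2)] :
    List (ℕ × ℕ))

instance (i j : ℕ) : Decidable (eAdj i j) := by unfold eAdj; infer_instance

/-- Cartan integers of the `E`-series (Bourbaki labelling, nodes `1,…,8`):
`E₆`, `E₇` and `E₈` are obtained by restricting to nodes `1,…,n`. -/
def cartanE (i j : ℕ) : ℝ :=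
  if i = j then 2 else if eAdj i j then -1 else 0

/-- Cartan integers of `F₄` (Bourbaki labelling, nodes `1,…,4`; `α₁, α₂` long,
`α₃, α₄` short), with the convention `C i j = 2(αᵢ,αⱼ)/(αⱼ,αⱼ)`. -/
def cartanF (i j : ℕ) : ℝ :=
  if i = j then 2 else
  if (i, j) ∈ ([(1,2),(2,1),(3,2),(3,4),(4,3)] : List (ℕ × ℕ)) then -1 else
  if (i, j) = (2,3) then -2 else 0

/-- Cartan integers of `Aₙ` (nodes `1,…,n`). -/
def cartanA (i j : ℕ) : ℝ :=
  if i = j then 2 else if i + 1 = j ∨ j + 1 = i then -1 else 0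

/-- The simple roots `αs` realise the Cartan matrix `C` (indexed by nodes `1,…,n`). -/
def CartanIs {n : ℕ} (αs : Fin n → V) (C : ℕ → ℕ → ℝ) : Prop :=
  ∀ i j : Fin n, 2 * ⟪αs i, αs j⟫ / ⟪αs j, αs j⟫ = C ((i : ℕ) + 1) ((j : ℕ) + 1)


lemma sref_apply (α : V) (hα : α ≠ 0) (y : V) :
    sref α y = y - (2 * ⟪α, y⟫ / ⟪α, α⟫) • α := by
  rw [sref]
  simp only [dif_neg hα]
  rw [Module.reflection_apply]
  congr 2
  simp [innerₛₗ]
  ring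

lemma sref_apply_self (α : V) : sref α α = -α := by
  by_cases hα : α = 0
  · simp [hα, sref]
  · rw [sref_apply α hα]
    have h' : ⟪α, α⟫ ≠ 0 := inner_self_ne_zero.mpr hα
    have h2 : 2 * ⟪α, α⟫ / ⟪α, α⟫ = 2 := by field_simp
    rw [h2, two_smul]
    abel

lemma sref_sref (α y : V) : sref α (sref α y) = y := by
  by_cases hα : α = 0
  · simp [hα, sref]
  · rw [sref]
    simp only [dif_neg hα]
    exact Module.involutive_reflection _ y

lemma sref_mul_self (α : V) : sref α * sref α = 1 := by
  ext y
  exact sref_sref α y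

lemma sref_inv (α : V) : (sref α)⁻¹ = sref α :=
  inv_eq_of_mul_eq_one_left (sref_mul_self α)

lemma sref_isometry (α : V) (x y : V) : ⟪sref α x, sref α y⟫ = ⟪x, y⟫ := by
  by_cases hα : α = 0
  · simp [hα, sref]
  · have h' : ⟪α, α⟫ ≠ 0 := inner_self_ne_zero.mpr hα
    rw [sref_apply α hα, sref_apply α hα]
    simp only [inner_sub_left, inner_sub_right, real_inner_smul_left,
      real_inner_smul_right, real_inner_comm α x]
    field_simp
    ring

lemma inner_self_pos' {β : V} (h : β ≠ 0) : 0 < ⟪β, β⟫ :=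
  lt_of_le_of_ne real_inner_self_nonneg (Ne.symm (inner_self_ne_zero.mpr h))

lemma sref_orth (α y : V) (h : ⟪α, y⟫ = 0) : sref α y = y := by
  by_cases hα : α = 0
  · simp [hα, sref]
  · rw [sref_apply α hα, h] ; simp


section Ctx

variable {Φ : Set V} {αs : Fin 6 → V} {Pos : Set V}

lemma cartanE_of_adj {i j : ℕ} (h1 : i ≠ j) (h2 : eAdj i j) : cartanE i j = -1 := by
  rw [cartanE, if_neg h1, if_pos h2]

lemma cartanE_of_nadj {i j : ℕ} (h1 : i ≠ j) (h2 : ¬ eAdj i j) : cartanE i j = 0 := by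
  rw [cartanE, if_neg h1, if_neg h2]

lemma coords_unique (hbase : IsBase Φ αs Pos) {r s : Fin 6 → ℝ}
    (h : ∑ i, r i • αs i = ∑ i, s i • αs i) : r = s := by
  funext j
  have h2 : ∑ i, (r i - s i) • αs i = 0 := by
    simp only [sub_smul, Finset.sum_sub_distrib, h, sub_self]
  have := Fintype.linearIndependent_iff.mp hbase.indep (fun i => r i - s i) h2 j
  linarith

lemma simple_mem_pos (hbase : IsBase Φ αs Pos) (i : Fin 6) : αs i ∈ Pos := by
  rw [hbase.mem_pos_iff _ (hbase.mem i)]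
  refine ⟨fun j => if j = i then 1 else 0, ?_⟩
  simp [ite_smul, Finset.sum_ite_eq']

lemma simple_ne_zero (hΦ : IsRootSystem Φ) (hbase : IsBase Φ αs Pos) (i : Fin 6) :
    αs i ≠ 0 := by
  intro h
  exact hΦ.nonzero (h ▸ hbase.mem i)

lemma simple_inner_self_ne (hΦ : IsRootSystem Φ) (hbase : IsBase Φ αs Pos) (i : Fin 6) :
    ⟪αs i, αs i⟫ ≠ 0 :=
  inner_self_ne_zero.mpr (simple_ne_zero hΦ hbase i)

lemma len_eq_of_adj (hΦ : IsRootSystem Φ) (hbase : IsBase Φ αs Pos) (hE : CartanIs αs cartanE)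
    {i j : Fin 6} (hne : ((i : ℕ)) + 1 ≠ ((j : ℕ)) + 1)
    (hadj : eAdj ((i : ℕ) + 1) ((j : ℕ) + 1)) (hadj' : eAdj ((j : ℕ) + 1) ((i : ℕ) + 1)) :
    ⟪αs i, αs i⟫ = ⟪αs j, αs j⟫ := by
  have h1 := hE i j
  have h2 := hE j i
  rw [cartanE_of_adj hne hadj] at h1
  rw [cartanE_of_adj (Ne.symm hne) hadj'] at h2
  have hi := simple_inner_self_ne hΦ hbase i
  have hj := simple_inner_self_ne hΦ hbase j
  rw [div_eq_iff hj] at h1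
  rw [div_eq_iff hi] at h2
  rw [real_inner_comm (αs i) (αs j)] at h2
  linarith

lemma simple_len (hΦ : IsRootSystem Φ) (hbase : IsBase Φ αs Pos) (hE : CartanIs αs cartanE)
    (i : Fin 6) : ⟪αs i, αs i⟫ = ⟪αs 0, αs 0⟫ := by
  have h02 : ⟪αs 0, αs 0⟫ = ⟪αs 2, αs 2⟫ :=
    len_eq_of_adj hΦ hbase hE (i := 0) (j := 2) (by decide) (by decide) (by decide)
  have h23 : ⟪αs 2, αs 2⟫ = ⟪αs 3, αs 3⟫ :=
    len_eq_of_adj hΦ hbase hE (i := 2) (j := 3) (by decide) (by decide) (by decide)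
  have h13 : ⟪αs 1, αs 1⟫ = ⟪αs 3, αs 3⟫ :=
    len_eq_of_adj hΦ hbase hE (i := 1) (j := 3) (by decide) (by decide) (by decide)
  have h34 : ⟪αs 3, αs 3⟫ = ⟪αs 4, αs 4⟫ :=
    len_eq_of_adj hΦ hbase hE (i := 3) (j := 4) (by decide) (by decide) (by decide)
  have h45 : ⟪αs 4, αs 4⟫ = ⟪αs 5, αs 5⟫ :=
    len_eq_of_adj hΦ hbase hE (i := 4) (j := 5) (by decide) (by decide) (by decide)
  fin_cases i <;> simp_all

lemma inner_simple (hΦ : IsRootSystem Φ) (hbase : IsBase Φ αs Pos) (hE : CartanIs αs cartanE)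
    (i j : Fin 6) :
    ⟪αs i, αs j⟫ = ⟪αs 0, αs 0⟫ / 2 * cartanE ((i : ℕ) + 1) ((j : ℕ) + 1) := by
  have h := hE i j
  have hj := simple_inner_self_ne hΦ hbase j
  rw [div_eq_iff hj] at h
  rw [simple_len hΦ hbase hE j] at h
  linarith


lemma root_pos_of_coord_pos (hΦ : IsRootSystem Φ) (hbase : IsBase Φ αs Pos) {γ : V}
    (hγ : γ ∈ Φ) (e : Fin 6 → ℝ) (he : γ = ∑ k, e k • αs k) (j : Fin 6) (hej : 0 < e j) :
    γ ∈ Pos := by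
  rcases hbase.pos_or_neg γ hγ with h | h
  · exact h
  · exfalso
    obtain ⟨d, hd⟩ := (hbase.mem_pos_iff _ (hbase.pos_subset h)).mp h
    have heq : ∑ k, e k • αs k = ∑ k, (-(d k : ℝ)) • αs k := by
      rw [← he]
      have : γ = -∑ k, (d k : ℝ) • αs k := by rw [← hd]; abel
      rw [this, ← Finset.sum_neg_distrib]
      congr 1; ext k; rw [neg_smul]
    have h2 := congrFun (coords_unique hbase heq) j
    have : (0:ℝ) ≤ (d j : ℝ) := Nat.cast_nonneg _
    rw [h2] at hej
    linarith

lemma pos_root_len (hΦ : IsRootSystem Φ) (hbase : IsBase Φ αs Pos) (hE : CartanIs αs cartanE) :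
    ∀ n : ℕ, ∀ β ∈ Pos, ∀ c : Fin 6 → ℕ, β = ∑ i, (c i : ℝ) • αs i → ∑ i, c i = n →
      ⟪β, β⟫ = ⟪αs 0, αs 0⟫ := by
  intro n
  induction n using Nat.strong_induction_on with
  | _ n IH =>
    intro β hβ c hc hn
    have hβΦ : β ∈ Φ := hbase.pos_subset hβ
    have hβ0 : β ≠ 0 := fun h => hΦ.nonzero (h ▸ hβΦ)
    have hββ : 0 < ⟪β, β⟫ := inner_self_pos' hβ0
    by_cases hsimp : ∃ i, β = αs i
    · obtain ⟨i, rfl⟩ := hsimp; exact simple_len hΦ hbase hE i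
    push_neg at hsimp
    have hexp : ⟪β, β⟫ = ∑ i, (c i : ℝ) * ⟪αs i, β⟫ := by
      rw [hc]
      simp only [sum_inner, real_inner_smul_left]
    have hex : ∃ i, 0 < c i ∧ 0 < ⟪αs i, β⟫ := by
      by_contra hcon
      push_neg at hcon
      have hle : ∑ i, (c i : ℝ) * ⟪αs i, β⟫ ≤ 0 := by
        apply Finset.sum_nonpos
        intro i _
        rcases Nat.eq_zero_or_pos (c i) with h | h
        · simp [h]
        · exact mul_nonpos_of_nonneg_of_nonpos (by positivity) (hcon i h)
      rw [← hexp] at hle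
      linarith
    obtain ⟨i, hci, hip⟩ := hex
    have hne1 : β ≠ αs i := hsimp i
    obtain ⟨m, hm⟩ := hΦ.crystallographic β hβΦ (αs i) (hbase.mem i)
    have hii : 0 < ⟪αs i, αs i⟫ := inner_self_pos' (simple_ne_zero hΦ hbase i)
    have hβi : ⟪β, αs i⟫ = ⟪αs i, β⟫ := real_inner_comm _ _
    have hmpos : (0:ℝ) < (m:ℝ) := by
      rw [← hm, hβi]
      apply div_pos (by linarith) hii
    have hm1 : (1:ℤ) ≤ m := by exact_mod_cast Int.cast_pos.mp hmpos
    have hγΦ : sref (αs i) β ∈ Φ := hΦ.refl_mem _ (hbase.mem i) _ hβΦ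
    have hγeq : sref (αs i) β = β - (m:ℝ) • αs i := by
      rw [sref_apply _ (simple_ne_zero hΦ hbase i) β, ← hβi, hm]
    set γ := sref (αs i) β with hγdef
    have hexj : ∃ j, j ≠ i ∧ 0 < c j := by
      by_contra hcon
      push_neg at hcon
      have hβci : β = (c i : ℝ) • αs i := by
        rw [hc, Finset.sum_eq_single i]
        · intro b _ hb
          have : c b = 0 := Nat.le_zero.mp (hcon b hb)
          simp [this]
        · intro h; exact absurd (Finset.mem_univ i) h
      rcases hΦ.reduced (αs i) (hbase.mem i) (c i : ℝ) (hβci ▸ hβΦ) with h1 | h1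
      · exact hne1 (by rw [hβci, h1, one_smul])
      · have : (0:ℝ) ≤ (c i : ℝ) := Nat.cast_nonneg _
        rw [h1] at this
        linarith
    obtain ⟨j, hji, hcj⟩ := hexj
    have hγcoords : γ = ∑ k, ((c k : ℝ) - if k = i then (m:ℝ) else 0) • αs k := by
      rw [hγeq, hc]
      simp only [sub_smul, Finset.sum_sub_distrib, ite_smul, zero_smul, Finset.sum_ite_eq',
        Finset.mem_univ, if_pos]
    have hγPos : γ ∈ Pos := by
      apply root_pos_of_coord_pos hΦ hbase hγΦ _ hγcoords j
      simp only [if_neg hji, sub_zero]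
      exact_mod_cast hcj
    obtain ⟨d, hd⟩ := (hbase.mem_pos_iff γ (hbase.pos_subset hγPos)).mp hγPos
    have hdc : ∀ k, (d k : ℝ) = (c k : ℝ) - if k = i then (m:ℝ) else 0 := by
      intro k
      exact congrFun (coords_unique hbase (hd ▸ hγcoords ▸ rfl : (∑ l, (d l:ℝ) • αs l) = ∑ l, ((c l : ℝ) - if l = i then (m:ℝ) else 0) • αs l)) k
    have hcr : (∑ k, ((c k : ℕ) : ℝ)) = (n : ℝ) := by
      rw [← Nat.cast_sum, hn]
    have hsum : (∑ k, (d k : ℝ)) = (n : ℝ) - (m : ℝ) := by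
      rw [Finset.sum_congr rfl (fun k _ => hdc k), Finset.sum_sub_distrib]
      simp only [Finset.sum_ite_eq', Finset.mem_univ, if_pos]
      rw [hcr]
    have hlt : ∑ k, d k < n := by
      have h1 : ((∑ k, d k : ℕ) : ℝ) = (n : ℝ) - (m : ℝ) := by
        rw [Nat.cast_sum]
        exact hsum
      have h2 : ((∑ k, d k : ℕ) : ℝ) < (n : ℝ) := by
        rw [h1]
        have : (1:ℝ) ≤ (m:ℝ) := by exact_mod_cast hm1
        linarith
      exact_mod_cast h2
    have hγlen := IH _ hlt γ hγPos d hd rfl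
    have : ⟪γ, γ⟫ = ⟪β, β⟫ := by rw [hγdef, sref_isometry]
    rw [← this, hγlen]

lemma root_len (hΦ : IsRootSystem Φ) (hbase : IsBase Φ αs Pos) (hE : CartanIs αs cartanE)
    {β : V} (hβ : β ∈ Φ) : ⟪β, β⟫ = ⟪αs 0, αs 0⟫ := by
  rcases hbase.pos_or_neg β hβ with h | h
  · obtain ⟨c, hc⟩ := (hbase.mem_pos_iff β hβ).mp h
    exact pos_root_len hΦ hbase hE _ β h c hc rfl
  · obtain ⟨c, hc⟩ := (hbase.mem_pos_iff (-β) (hΦ.neg_mem β hβ)).mp h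
    have := pos_root_len hΦ hbase hE _ (-β) h c hc rfl
    rw [inner_neg_neg] at this
    exact this


lemma coords_sum_pos (hΦ : IsRootSystem Φ) {δ : V} (hδΦ : δ ∈ Φ)
    (d : Fin 6 → ℕ) (hd : δ = ∑ k, (d k : ℝ) • αs k) : 1 ≤ ∑ k, d k := by
  by_contra h
  push_neg at h
  have hδ0 : δ = 0 := by
    rw [hd, Finset.sum_eq_zero]
    intro k _
    have := Finset.single_le_sum (f := d) (fun k _ => Nat.zero_le _) (Finset.mem_univ k)
    have : d k = 0 := by omega
    simp [this]
  exact hΦ.nonzero (hδ0 ▸ hδΦ)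

lemma root_sub_mem (hΦ : IsRootSystem Φ) (hbase : IsBase Φ αs Pos) (hE : CartanIs αs cartanE)
    {α β : V} (hα : α ∈ Φ) (hβ : β ∈ Φ) (hne : β ≠ α) (hip : 0 < ⟪α, β⟫) :
    β - α ∈ Φ := by
  have hα0 : α ≠ 0 := fun h => hΦ.nonzero (h ▸ hα)
  have hβ0 : β ≠ 0 := fun h => hΦ.nonzero (h ▸ hβ)
  have hlα := root_len hΦ hbase hE hα
  have hlβ := root_len hΦ hbase hE hβ
  have hcst : 0 < ⟪αs 0, αs 0⟫ := by
    rw [← hlα]; exact inner_self_pos' hα0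
  obtain ⟨m, hm⟩ := hΦ.crystallographic α hα β hβ
  rw [hlβ, div_eq_iff (ne_of_gt hcst)] at hm
  have hmZ : 0 < m := by
    have hr : (0:ℝ) < (m:ℝ) := by
      have := mul_pos (mul_pos (by norm_num : (0:ℝ) < 2) hip) (inv_pos.mpr hcst)
      calc (0:ℝ) < 2 * ⟪α, β⟫ * (⟪αs 0, αs 0⟫)⁻¹ := this
      _ = (m:ℝ) := by rw [hm]; field_simp
    exact_mod_cast hr
  have hm1 : (1:ℝ) ≤ (m:ℝ) := by exact_mod_cast hmZ
  have hsub : 0 ≤ ⟪α - β, α - β⟫ := real_inner_self_nonneg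
  have hexp : ⟪α - β, α - β⟫ = 2 * ⟪αs 0, αs 0⟫ - 2 * ⟪α, β⟫ := by
    rw [inner_sub_left, inner_sub_right, inner_sub_right, hlα, hlβ, real_inner_comm β α]
    ring
  have hm2 : (m:ℝ) ≤ 2 := by
    rw [hexp, hm] at hsub
    nlinarith
  have hmeq : (m:ℝ) = 1 := by
    rcases eq_or_lt_of_le hm2 with h | h
    · exfalso
      have hzero : ⟪α - β, α - β⟫ = 0 := by rw [hexp, hm, h]; ring
      have : α - β = 0 := by
        by_contra hne0
        exact absurd hzero (ne_of_gt (inner_self_pos' hne0))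
      exact hne (sub_eq_zero.mp this).symm
    · have h2 : m < 2 := by exact_mod_cast h
      have h3 : 1 ≤ m := hmZ
      have : m = 1 := by omega
      rw [this]
      norm_num
  have hsβ : sref α β = β - α := by
    rw [sref_apply _ hα0, hlα, hm, hmeq, one_mul]
    congr 2
    field_simp
    simp
  rw [← hsβ]
  exact hΦ.refl_mem α hα β hβ

lemma pos_decompose (hΦ : IsRootSystem Φ) (hbase : IsBase Φ αs Pos) (hE : CartanIs αs cartanE)
    {β : V} (hβ : β ∈ Pos) (c : Fin 6 → ℕ) (hc : β = ∑ i, (c i : ℝ) • αs i)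
    (h2 : 2 ≤ ∑ i, c i) : ∃ δ ∈ Pos, ∃ i, β = δ + αs i := by
  have hβΦ : β ∈ Φ := hbase.pos_subset hβ
  have hβ0 : β ≠ 0 := fun h => hΦ.nonzero (h ▸ hβΦ)
  have hββ : 0 < ⟪β, β⟫ := inner_self_pos' hβ0
  have hexp : ⟪β, β⟫ = ∑ i, (c i : ℝ) * ⟪αs i, β⟫ := by
    rw [hc]
    simp only [sum_inner, real_inner_smul_left]
  have hex : ∃ i, 0 < c i ∧ 0 < ⟪αs i, β⟫ := by
    by_contra hcon
    push_neg at hcon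
    have hle : ∑ i, (c i : ℝ) * ⟪αs i, β⟫ ≤ 0 := by
      apply Finset.sum_nonpos
      intro i _
      rcases Nat.eq_zero_or_pos (c i) with h | h
      · simp [h]
      · exact mul_nonpos_of_nonneg_of_nonpos (by positivity) (hcon i h)
    rw [← hexp] at hle
    linarith
  obtain ⟨i, hci, hip⟩ := hex
  have hne1 : β ≠ αs i := by
    intro h
    have heq : ∑ k, (c k : ℝ) • αs k = ∑ k, (if k = i then (1:ℝ) else 0) • αs k := by
      rw [← hc, h]
      simp [ite_smul, Finset.sum_ite_eq']
    have hcu := coords_unique hbase heq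
    have hsum : ∑ k, c k = 1 := by
      have : ((∑ k, c k : ℕ) : ℝ) = 1 := by
        rw [Nat.cast_sum]
        rw [Finset.sum_congr rfl (fun k _ => congrFun hcu k)]
        simp
      exact_mod_cast this
    omega
  have hγΦ : β - αs i ∈ Φ := root_sub_mem hΦ hbase hE (hbase.mem i) hβΦ hne1 hip
  have hexj : ∃ j, j ≠ i ∧ 0 < c j := by
    by_contra hcon
    push_neg at hcon
    have hβci : β = (c i : ℝ) • αs i := by
      rw [hc, Finset.sum_eq_single i]
      · intro b _ hb
        have : c b = 0 := Nat.le_zero.mp (hcon b hb)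
        simp [this]
      · intro h; exact absurd (Finset.mem_univ i) h
    rcases hΦ.reduced (αs i) (hbase.mem i) (c i : ℝ) (hβci ▸ hβΦ) with h1 | h1
    · exact hne1 (by rw [hβci, h1, one_smul])
    · have : (0:ℝ) ≤ (c i : ℝ) := Nat.cast_nonneg _
      rw [h1] at this
      linarith
  obtain ⟨j, hji, hcj⟩ := hexj
  have hγcoords : β - αs i = ∑ k, ((c k : ℝ) - if k = i then (1:ℝ) else 0) • αs k := by
    rw [hc]
    simp only [sub_smul, Finset.sum_sub_distrib, ite_smul, zero_smul, Finset.sum_ite_eq',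
      Finset.mem_univ, if_pos, one_smul]
  have hγPos : β - αs i ∈ Pos := by
    apply root_pos_of_coord_pos hΦ hbase hγΦ _ hγcoords j
    simp only [if_neg hji, sub_zero]
    exact_mod_cast hcj
  exact ⟨β - αs i, hγPos, i, by abel⟩

lemma indecomposable_simple (hΦ : IsRootSystem Φ) (hbase : IsBase Φ αs Pos)
    (hE : CartanIs αs cartanE) {β : V} (hβ : β ∈ Pos)
    (hind : ∀ δ ∈ Pos, ∀ ε ∈ Pos, β ≠ δ + ε) : ∃ i, β = αs i := by
  obtain ⟨c, hc⟩ := (hbase.mem_pos_iff β (hbase.pos_subset hβ)).mp hβ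
  have hβ0 : β ≠ 0 := fun h => hΦ.nonzero (h ▸ hbase.pos_subset hβ)
  have h1 : 1 ≤ ∑ i, c i := coords_sum_pos hΦ (hbase.pos_subset hβ) c hc
  rcases Nat.lt_or_ge (∑ i, c i) 2 with hlt | hge
  · have hsum1 : ∑ i, c i = 1 := by omega
    obtain ⟨i, hi⟩ : ∃ i, c i ≠ 0 := by
      by_contra h
      push_neg at h
      rw [Finset.sum_eq_zero (fun k _ => h k)] at hsum1
      omega
    have hci : c i = 1 ∧ ∀ j, j ≠ i → c j = 0 := by
      constructor
      · have h2 := Finset.add_sum_erase Finset.univ c (Finset.mem_univ i)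
        rw [hsum1] at h2
        omega
      · intro j hj
        have h2 := Finset.add_sum_erase Finset.univ c (Finset.mem_univ i)
        rw [hsum1] at h2
        have hj' : j ∈ Finset.univ.erase i := Finset.mem_erase.mpr ⟨hj, Finset.mem_univ j⟩
        have := Finset.single_le_sum (f := c) (fun k _ => Nat.zero_le _) hj'
        omega
    refine ⟨i, ?_⟩
    rw [hc, Finset.sum_eq_single i]
    · rw [hci.1]; simp
    · intro b _ hb
      rw [hci.2 b hb]; simp
    · intro h; exact absurd (Finset.mem_univ i) h
  · obtain ⟨δ, hδ, i, hdecomp⟩ := pos_decompose hΦ hbase hE hβ c hc hge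
    exact absurd hdecomp (hind δ hδ (αs i) (simple_mem_pos hbase i))

lemma simple_indecomp (hΦ : IsRootSystem Φ) (hbase : IsBase Φ αs Pos) (i : Fin 6)
    {δ ε : V} (hδ : δ ∈ Pos) (hε : ε ∈ Pos) : αs i ≠ δ + ε := by
  intro h
  obtain ⟨d, hd⟩ := (hbase.mem_pos_iff δ (hbase.pos_subset hδ)).mp hδ
  obtain ⟨e, he⟩ := (hbase.mem_pos_iff ε (hbase.pos_subset hε)).mp hε
  have h1 : αs i = ∑ k, (if k = i then (1:ℝ) else 0) • αs k := by
    simp [ite_smul, Finset.sum_ite_eq']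
  have h2 : αs i = ∑ k, ((d k : ℝ) + (e k : ℝ)) • αs k := by
    rw [h, hd, he, ← Finset.sum_add_distrib]
    congr 1; ext k; rw [add_smul]
  have hcu := coords_unique hbase (r := fun k => if k = i then (1:ℝ) else 0)
    (s := fun k => (d k : ℝ) + (e k : ℝ)) (by rw [← h1, ← h2])
  have key : ∀ k, (if k = i then (1:ℕ) else 0) = d k + e k := by
    intro k
    have hk := congrFun hcu k
    split at hk <;> rename_i hcase
    · simp only [if_pos hcase]
      exact_mod_cast hk
    · simp only [if_neg hcase]
      exact_mod_cast hk
  have hsum : (1:ℕ) = ∑ k, (d k + e k) := by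
    rw [← Finset.sum_congr rfl (fun k _ => key k)]
    simp
  rw [Finset.sum_add_distrib] at hsum
  have hd1 : 1 ≤ ∑ k, d k := coords_sum_pos hΦ (hbase.pos_subset hδ) d hd
  have he1 : 1 ≤ ∑ k, e k := coords_sum_pos hΦ (hbase.pos_subset hε) e he
  omega


end Ctx

def rootLat (αs : Fin 6 → V) : Set V := {v | ∃ z : Fin 6 → ℤ, v = ∑ i, (z i : ℝ) • αs i}

section Lat

variable {Φ : Set V} {αs : Fin 6 → V} {Pos : Set V}

lemma rootLat_add {v w : V} (hv : v ∈ rootLat αs) (hw : w ∈ rootLat αs) :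
    v + w ∈ rootLat αs := by
  obtain ⟨z, hz⟩ := hv
  obtain ⟨y, hy⟩ := hw
  exact ⟨z + y, by rw [hz, hy, ← Finset.sum_add_distrib]; congr 1; ext k; simp only [Pi.add_apply, Int.cast_add, add_smul]⟩

lemma rootLat_zsmul (z : ℤ) {v : V} (hv : v ∈ rootLat αs) : (z : ℝ) • v ∈ rootLat αs := by
  obtain ⟨y, hy⟩ := hv
  refine ⟨fun k => z * y k, ?_⟩
  rw [hy, Finset.smul_sum]
  congr 1; ext k
  push_cast
  rw [smul_smul]


lemma root_mem_rootLat (hΦ : IsRootSystem Φ) (hbase : IsBase Φ αs Pos) {α : V} (hα : α ∈ Φ) :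
    α ∈ rootLat αs := by
  rcases hbase.pos_or_neg α hα with h | h
  · obtain ⟨c, hc⟩ := (hbase.mem_pos_iff α hα).mp h
    exact ⟨fun k => (c k : ℤ), by rw [hc]; norm_num⟩
  · obtain ⟨c, hc⟩ := (hbase.mem_pos_iff _ (hΦ.neg_mem α hα)).mp h
    refine ⟨fun k => -(c k : ℤ), ?_⟩
    have : α = -∑ k, (c k : ℝ) • αs k := by rw [← hc]; abel
    rw [this, ← Finset.sum_neg_distrib]
    congr 1; ext k
    push_cast
    rw [neg_smul]

lemma root_int (hΦ : IsRootSystem Φ) (hbase : IsBase Φ αs Pos) {α : V} (hα : α ∈ Φ) {v : V}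
    (hv : ∀ j, ∃ z : ℤ, 2 * ⟪αs j, v⟫ = (z : ℝ) * ⟪αs 0, αs 0⟫) :
    ∃ z : ℤ, 2 * ⟪α, v⟫ = (z : ℝ) * ⟪αs 0, αs 0⟫ := by
  choose z hz using hv
  have key : ∀ (c : Fin 6 → ℕ), 2 * ⟪∑ k, (c k : ℝ) • αs k, v⟫ =
      ((∑ k, (c k : ℤ) * z k : ℤ) : ℝ) * ⟪αs 0, αs 0⟫ := by
    intro c
    rw [sum_inner, Finset.mul_sum]
    push_cast
    rw [Finset.sum_mul]
    congr 1; ext k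
    rw [real_inner_smul_left]
    push_cast
    linear_combination (c k : ℝ) * hz k
  rcases hbase.pos_or_neg α hα with h | h
  · obtain ⟨c, hc⟩ := (hbase.mem_pos_iff α hα).mp h
    exact ⟨∑ k, (c k : ℤ) * z k, by rw [hc]; exact key c⟩
  · obtain ⟨c, hc⟩ := (hbase.mem_pos_iff _ (hΦ.neg_mem α hα)).mp h
    refine ⟨-∑ k, (c k : ℤ) * z k, ?_⟩
    have hα' : α = -∑ k, (c k : ℝ) • αs k := by rw [← hc]; abel
    rw [hα', inner_neg_left]
    push_cast
    have := key c
    push_cast at this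
    linarith

lemma sref_coeff (hΦ : IsRootSystem Φ) (hbase : IsBase Φ αs Pos) (hE : CartanIs αs cartanE)
    {α : V} (hα : α ∈ Φ) {v : V}
    (hv : ∀ j, ∃ z : ℤ, 2 * ⟪αs j, v⟫ = (z : ℝ) * ⟪αs 0, αs 0⟫) :
    ∃ z : ℤ, sref α v = v - (z : ℝ) • α := by
  have hα0 : α ≠ 0 := fun h => hΦ.nonzero (h ▸ hα)
  obtain ⟨z, hz⟩ := root_int hΦ hbase hα hv
  refine ⟨z, ?_⟩
  rw [sref_apply _ hα0 v, root_len hΦ hbase hE hα]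
  have hcst : ⟪αs 0, αs 0⟫ ≠ 0 := inner_self_ne_zero.mpr (simple_ne_zero hΦ hbase 0)
  congr 2
  rw [div_eq_iff hcst, hz]

lemma lat_P (hΦ : IsRootSystem Φ) (hbase : IsBase Φ αs Pos) (hE : CartanIs αs cartanE)
    {v : V} (hv : v ∈ rootLat αs) (j : Fin 6) :
    ∃ z : ℤ, 2 * ⟪αs j, v⟫ = (z : ℝ) * ⟪αs 0, αs 0⟫ := by
  obtain ⟨y, hy⟩ := hv
  have hm : ∀ k, ∃ m : ℤ, 2 * ⟪αs j, αs k⟫ = (m : ℝ) * ⟪αs 0, αs 0⟫ := by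
    intro k
    obtain ⟨m, hm⟩ := hΦ.crystallographic (αs j) (hbase.mem j) (αs k) (hbase.mem k)
    rw [simple_len hΦ hbase hE k] at hm
    have hcst : ⟪αs 0, αs 0⟫ ≠ 0 := inner_self_ne_zero.mpr (simple_ne_zero hΦ hbase 0)
    rw [div_eq_iff hcst] at hm
    exact ⟨m, hm⟩
  choose m hmz using hm
  refine ⟨∑ k, y k * m k, ?_⟩
  rw [hy, inner_sum, Finset.mul_sum]
  push_cast
  rw [Finset.sum_mul]
  congr 1; ext k
  rw [real_inner_smul_right]
  push_cast
  linear_combination (y k : ℝ) * hmz k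

lemma sref_lat (hΦ : IsRootSystem Φ) (hbase : IsBase Φ αs Pos) (hE : CartanIs αs cartanE)
    {α : V} (hα : α ∈ Φ) {v : V} (hv : v ∈ rootLat αs) : sref α v ∈ rootLat αs := by
  obtain ⟨z, hz⟩ := sref_coeff hΦ hbase hE hα (lat_P hΦ hbase hE hv)
  rw [hz, sub_eq_add_neg]
  apply rootLat_add hv
  have := rootLat_zsmul (-z) (root_mem_rootLat hΦ hbase hα)
  push_cast at this
  rw [neg_smul] at this
  exact this

lemma mul_apply' (a b : V ≃ₗ[ℝ] V) (v : V) : (a * b) v = a (b v) := rfl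

lemma apply_inv_apply (a : V ≃ₗ[ℝ] V) (x : V) : a (a⁻¹ x) = x := by
  have h : (a * a⁻¹) x = (1 : V ≃ₗ[ℝ] V) x := by rw [mul_inv_cancel]
  rw [mul_apply'] at h
  exact h

lemma inv_apply_apply (a : V ≃ₗ[ℝ] V) (x : V) : a⁻¹ (a x) = x := by
  have h : (a⁻¹ * a) x = (1 : V ≃ₗ[ℝ] V) x := by rw [inv_mul_cancel]
  rw [mul_apply'] at h
  exact h

def goodSub (Φ : Set V) (αs : Fin 6 → V) (lam : V) : Subgroup (V ≃ₗ[ℝ] V) where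
  carrier := {w | (∀ β ∈ Φ, w β ∈ Φ) ∧ (∀ β ∈ Φ, w⁻¹ β ∈ Φ) ∧ (∀ x y : V, ⟪w x, w y⟫ = ⟪x, y⟫) ∧
    (∀ v ∈ rootLat αs, w v ∈ rootLat αs) ∧ (∀ v ∈ rootLat αs, w⁻¹ v ∈ rootLat αs) ∧
    (w lam - lam ∈ rootLat αs) ∧ (w⁻¹ lam - lam ∈ rootLat αs)}
  one_mem' := by
    have h0 : (1 : V ≃ₗ[ℝ] V) lam - lam ∈ rootLat αs := ⟨0, by
      show lam - lam = _
      simp⟩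
    exact ⟨fun β hβ => hβ, fun β hβ => by rw [inv_one]; exact hβ, fun x y => rfl,
      fun v hv => hv, fun v hv => by rw [inv_one]; exact hv, h0, by rw [inv_one]; exact h0⟩
  mul_mem' := by
    rintro a b ⟨ha1, ha2, ha3, ha4, ha5, ha6, ha7⟩ ⟨hb1, hb2, hb3, hb4, hb5, hb6, hb7⟩
    refine ⟨fun β hβ => by rw [mul_apply']; exact ha1 _ (hb1 _ hβ),
      fun β hβ => by rw [mul_inv_rev, mul_apply']; exact hb2 _ (ha2 _ hβ),
      fun x y => by rw [mul_apply', mul_apply', ha3, hb3],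
      fun v hv => by rw [mul_apply']; exact ha4 _ (hb4 _ hv),
      fun v hv => by rw [mul_inv_rev, mul_apply']; exact hb5 _ (ha5 _ hv), ?_, ?_⟩
    · have heq : (a * b) lam - lam = a (b lam - lam) + (a lam - lam) := by
        rw [map_sub, mul_apply']
        abel
      rw [heq]
      exact rootLat_add (ha4 _ hb6) ha6
    · have heq : (a * b)⁻¹ lam - lam = b⁻¹ (a⁻¹ lam - lam) + (b⁻¹ lam - lam) := by
        rw [mul_inv_rev, map_sub, mul_apply']
        abel
      rw [heq]
      exact rootLat_add (hb5 _ ha7) hb7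
  inv_mem' := by
    rintro a ⟨h1, h2, h3, h4, h5, h6, h7⟩
    refine ⟨h2, fun β hβ => by rw [inv_inv]; exact h1 _ hβ,
      fun x y => ?_, h5, fun v hv => by rw [inv_inv]; exact h4 _ hv, h7,
      by rw [inv_inv]; exact h6⟩
    rw [← h3 (a⁻¹ x) (a⁻¹ y), apply_inv_apply, apply_inv_apply]

lemma weyl_good (hΦ : IsRootSystem Φ) (hbase : IsBase Φ αs Pos) (hE : CartanIs αs cartanE)
    (lam : V) (hlam : ∀ j, ∃ z : ℤ, 2 * ⟪αs j, lam⟫ = (z : ℝ) * ⟪αs 0, αs 0⟫) :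
    ∀ w ∈ weylGroup Φ, (∀ β ∈ Φ, w β ∈ Φ) ∧ (∀ x y : V, ⟪w x, w y⟫ = ⟪x, y⟫) ∧
      w lam - lam ∈ rootLat αs := by
  have hle : weylGroup Φ ≤ goodSub Φ αs lam := by
    rw [weylGroup]
    apply (Subgroup.closure_le _).mpr
    rintro x ⟨α, hα, rfl⟩
    have hlamlat : sref α lam - lam ∈ rootLat αs := by
      obtain ⟨z, hz⟩ := sref_coeff hΦ hbase hE hα hlam
      rw [hz]
      have := rootLat_zsmul (-z) (root_mem_rootLat hΦ hbase hα)
      push_cast at this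
      rw [neg_smul] at this
      simpa using this
    refine ⟨fun β hβ => hΦ.refl_mem α hα β hβ,
      fun β hβ => by rw [sref_inv]; exact hΦ.refl_mem α hα β hβ,
      fun x y => sref_isometry α x y,
      fun v hv => sref_lat hΦ hbase hE hα hv,
      fun v hv => by rw [sref_inv]; exact sref_lat hΦ hbase hE hα hv,
      hlamlat, by rw [sref_inv]; exact hlamlat⟩
  intro w hw
  obtain ⟨g1, g2, g3, g4, g5, g6, g7⟩ := hle hw
  exact ⟨g1, g3, g6⟩

end Lat

def adjF (i j : Fin 6) : Prop := eAdj ((i:ℕ)+1) ((j:ℕ)+1)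
instance (i j : Fin 6) : Decidable (adjF i j) := by unfold adjF; infer_instance
lemma deg3 : ∀ x u v w : Fin 6, u ≠ v → u ≠ w → v ≠ w →
    adjF u x → adjF v x → adjF w x → x = 3 := by decide
lemma nbr3 : ∀ x y : Fin 6, adjF x 3 → adjF y x → y ≠ 3 → x = 2 ∨ x = 4 := by decide
lemma n2' : ∀ y : Fin 6, adjF y 2 → y = 0 ∨ y = 3 := by decide
lemma n4' : ∀ y : Fin 6, adjF y 4 → y = 3 ∨ y = 5 := by decide
lemma n3' : ∀ y : Fin 6, adjF y 3 → y = 1 ∨ y = 2 ∨ y = 4 := by decide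

lemma perm_classify (f : Fin 6 → Fin 6) (hinj : Function.Injective f)
    (hadj : ∀ i j, i ≠ j → (adjF (f i) (f j) ↔ adjF i j)) :
    f = id ∨ f = ![5, 1, 4, 3, 2, 0] := by
  have hne : ∀ i j : Fin 6, i ≠ j → f i ≠ f j := fun i j h => fun he => h (hinj he)
  have a13 : adjF (f 1) (f 3) := (hadj 1 3 (by decide)).mpr (by decide)
  have a23 : adjF (f 2) (f 3) := (hadj 2 3 (by decide)).mpr (by decide)
  have a43 : adjF (f 4) (f 3) := (hadj 4 3 (by decide)).mpr (by decide)
  have a02 : adjF (f 0) (f 2) := (hadj 0 2 (by decide)).mpr (by decide)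
  have a54 : adjF (f 5) (f 4) := (hadj 5 4 (by decide)).mpr (by decide)
  have h3 : f 3 = 3 :=
    deg3 (f 3) (f 1) (f 2) (f 4) (hne 1 2 (by decide)) (hne 1 4 (by decide))
      (hne 2 4 (by decide)) a13 a23 a43
  rw [h3] at a13 a23 a43
  have h03 : f 0 ≠ 3 := h3 ▸ hne 0 3 (by decide)
  have h53 : f 5 ≠ 3 := h3 ▸ hne 5 3 (by decide)
  have h2 : f 2 = 2 ∨ f 2 = 4 := nbr3 (f 2) (f 0) a23 a02 h03
  have h4 : f 4 = 2 ∨ f 4 = 4 := nbr3 (f 4) (f 5) a43 a54 h53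
  have h24 : f 2 ≠ f 4 := hne 2 4 (by decide)
  have h1 : f 1 = 1 ∨ f 1 = 2 ∨ f 1 = 4 := n3' (f 1) a13
  have h12 : f 1 ≠ f 2 := hne 1 2 (by decide)
  have h14 : f 1 ≠ f 4 := hne 1 4 (by decide)
  rcases h2 with h2 | h2
  · left
    have h4' : f 4 = 4 := by
      rcases h4 with h | h
      · exact absurd (h2.trans h.symm) h24
      · exact h
    have h0' : f 0 = 0 := by
      rcases n2' (f 0) (h2 ▸ a02) with h | h
      · exact h
      · exact absurd h h03
    have h5' : f 5 = 5 := by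
      rcases n4' (f 5) (h4' ▸ a54) with h | h
      · exact absurd h h53
      · exact h
    have h1' : f 1 = 1 := by
      rcases h1 with h | h | h
      · exact h
      · exact absurd (h.trans h2.symm) h12
      · exact absurd (h.trans h4'.symm) h14
    funext i
    fin_cases i <;> simp_all <;> decide
  · right
    have h4' : f 4 = 2 := by
      rcases h4 with h | h
      · exact h
      · exact absurd (h2.trans h.symm) h24
    have h0' : f 0 = 5 := by
      rcases n4' (f 0) (h2 ▸ a02) with h | h
      · exact absurd h h03
      · exact h
    have h5' : f 5 = 0 := by
      rcases n2' (f 5) (h4' ▸ a54) with h | h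
      · exact h
      · exact absurd h h53
    have h1' : f 1 = 1 := by
      rcases h1 with h | h | h
      · exact h
      · exact absurd (h.trans h4'.symm) h14
      · exact absurd (h.trans h2.symm) h12
    funext i
    fin_cases i <;> simp_all <;> decide


section Main

variable {Φ : Set V} {αs : Fin 6 → V} {Pos : Set V}

lemma w0_neg_sigma (hΦ : IsRootSystem Φ) (hbase : IsBase Φ αs Pos) (hE : CartanIs αs cartanE)
    (w₀ : V ≃ₗ[ℝ] V) (hw₀mem : w₀ ∈ weylGroup Φ) (hw₀ : ∀ γ ∈ Pos, -(w₀ γ) ∈ Pos) :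
    ∀ i, w₀ (αs i) = -αs (![5, 1, 4, 3, 2, 0] i) := by
  classical
  set cst := ⟪αs 0, αs 0⟫ with hcstdef
  have hcst0 : cst ≠ 0 := inner_self_ne_zero.mpr (simple_ne_zero hΦ hbase 0)
  have hval : ∀ i j : Fin 6, ⟪αs i, αs j⟫ = cst / 2 * cartanE ((i:ℕ)+1) ((j:ℕ)+1) :=
    inner_simple hΦ hbase hE
  -- the weight λ
  set lam : V := (4/3 : ℝ) • αs 0 + (1 : ℝ) • αs 1 + (5/3 : ℝ) • αs 2 + (2 : ℝ) • αs 3 +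
    (4/3 : ℝ) • αs 4 + (2/3 : ℝ) • αs 5 with hlamdef
  have hlamj : ∀ j : Fin 6, 2 * ⟪αs j, lam⟫ = (if j = 0 then (1:ℝ) else 0) * cst := by
    intro j
    rw [hlamdef]
    simp only [inner_add_right, real_inner_smul_right]
    fin_cases j <;>
    · rw [hval, hval, hval, hval, hval, hval]
      norm_num [cartanE, eAdj, Fin.ext_iff, show ((0:Fin 6):ℕ) = 0 from rfl, show ((1:Fin 6):ℕ) = 1 from rfl,
        show ((2:Fin 6):ℕ) = 2 from rfl, show ((3:Fin 6):ℕ) = 3 from rfl,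
        show ((4:Fin 6):ℕ) = 4 from rfl, show ((5:Fin 6):ℕ) = 5 from rfl]
      try ring
  have hlam : ∀ j : Fin 6, ∃ z : ℤ, 2 * ⟪αs j, lam⟫ = (z : ℝ) * cst := by
    intro j
    refine ⟨if j = 0 then 1 else 0, ?_⟩
    rw [hlamj j]
    split <;> norm_num
  obtain ⟨hw1, hw2, hw3⟩ := weyl_good hΦ hbase hE lam hlam w₀ hw₀mem
  -- γ i = -(w₀ (αs i)) are indecomposable positive roots
  have hγPos : ∀ i, -(w₀ (αs i)) ∈ Pos := fun i => hw₀ _ (simple_mem_pos hbase i)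
  have hPosfin : Pos.Finite := hΦ.finite.subset hbase.pos_subset
  have hmapsTo : Set.MapsTo (fun γ => -(w₀ γ)) Pos Pos := fun γ hγ => hw₀ γ hγ
  have hinjOn : Set.InjOn (fun γ => -(w₀ γ)) Pos := by
    intro a _ b _ h
    simp only [neg_inj] at h
    exact w₀.injective h
  have hbij := (hPosfin.injOn_iff_bijOn_of_mapsTo hmapsTo).mp hinjOn
  have hsurj : ∀ δ ∈ Pos, ∃ δ₀ ∈ Pos, -(w₀ δ₀) = δ := by
    intro δ hδ
    obtain ⟨δ₀, hδ₀, hh⟩ := hbij.surjOn hδ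
    exact ⟨δ₀, hδ₀, hh⟩
  have hind : ∀ i, ∀ δ ∈ Pos, ∀ ε ∈ Pos, -(w₀ (αs i)) ≠ δ + ε := by
    intro i δ hδ ε hε heq
    obtain ⟨δ₀, hδ₀, hδe⟩ := hsurj δ hδ
    obtain ⟨ε₀, hε₀, hεe⟩ := hsurj ε hε
    have : -(w₀ (αs i)) = -(w₀ (δ₀ + ε₀)) := by
      rw [map_add, heq, ← hδe, ← hεe]
      abel
    have h2 : αs i = δ₀ + ε₀ := w₀.injective (by
      have := neg_injective this
      exact this)
    exact simple_indecomp hΦ hbase i hδ₀ hε₀ h2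
  have hsimple : ∀ i, ∃ j, -(w₀ (αs i)) = αs j := fun i =>
    indecomposable_simple hΦ hbase hE (hγPos i) (hind i)
  choose τ hτ using hsimple
  have hαinj : Function.Injective αs := hbase.indep.injective
  have hτinj : Function.Injective τ := by
    intro i j h
    have : -(w₀ (αs i)) = -(w₀ (αs j)) := by rw [hτ i, hτ j, h]
    have := w₀.injective (neg_injective this)
    exact hαinj this
  -- adjacency preservation
  have hiso : ∀ i j, ⟪αs (τ i), αs (τ j)⟫ = ⟪αs i, αs j⟫ := by
    intro i j
    rw [← hτ i, ← hτ j, inner_neg_neg, hw2]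
  have hEeq : ∀ i j, cartanE ((τ i : ℕ)+1) ((τ j : ℕ)+1) = cartanE ((i:ℕ)+1) ((j:ℕ)+1) := by
    intro i j
    have := hiso i j
    rw [hval, hval] at this
    have h2 : cst / 2 ≠ 0 := by
      intro h
      exact hcst0 (by linarith [h])
    exact mul_left_cancel₀ h2 this
  have hvalne : ∀ {a b : Fin 6}, a ≠ b → ((a:ℕ)+1) ≠ ((b:ℕ)+1) := by
    intro a b h hh
    exact h (Fin.val_injective (by omega))
  have hadjiff : ∀ i j : Fin 6, i ≠ j → (adjF (τ i) (τ j) ↔ adjF i j) := by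
    intro i j hij
    have hτij : τ i ≠ τ j := fun h => hij (hτinj h)
    constructor
    · intro h
      by_contra hn
      have h1 := cartanE_of_adj (hvalne hτij) h
      have h2 := cartanE_of_nadj (hvalne hij) hn
      rw [hEeq i j] at h1
      rw [h1] at h2
      norm_num at h2
    · intro h
      by_contra hn
      have h1 := cartanE_of_adj (hvalne hij) h
      have h2 := cartanE_of_nadj (hvalne hτij) hn
      rw [hEeq i j] at h2
      rw [h1] at h2
      norm_num at h2
  rcases perm_classify τ hτinj hadjiff with hid | hpi
  · -- τ = id : contradiction via the weight lattice
    exfalso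
    have hw0i : ∀ i, w₀ (αs i) = -αs i := by
      intro i
      have := hτ i
      rw [hid] at this
      simp only [id] at this
      exact neg_eq_iff_eq_neg.mp this
    have hw0lam : w₀ lam = -lam := by
      rw [hlamdef]
      simp only [map_add, map_smul, hw0i]
      module
    rw [hw0lam] at hw3
    have h2lam : -lam - lam = (-2 : ℝ) • lam := by
      rw [neg_smul, two_smul]
      abel
    rw [h2lam] at hw3
    obtain ⟨z, hz⟩ := hw3
    set g : Fin 6 → ℝ := fun i => (-2:ℝ) * (if i = 0 then 4/3 else if i = 1 then 1 else
      if i = 2 then 5/3 else if i = 3 then 2 else if i = 4 then 4/3 else (2/3:ℝ)) with hgdef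
    have hcoords : (-2 : ℝ) • lam = ∑ i, g i • αs i := by
      rw [hlamdef, Fin.sum_univ_six, hgdef]
      norm_num [Fin.ext_iff, show ((0:Fin 6):ℕ) = 0 from rfl, show ((1:Fin 6):ℕ) = 1 from rfl, show ((2:Fin 6):ℕ) = 2 from rfl, show ((3:Fin 6):ℕ) = 3 from rfl, show ((4:Fin 6):ℕ) = 4 from rfl, show ((5:Fin 6):ℕ) = 5 from rfl]
      module
    have hzc : ∑ i, ((z i : ℝ)) • αs i = ∑ i, g i • αs i := by
      rw [← hz, ← hcoords]
    have h0 := congrFun (coords_unique hbase hzc) 0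
    rw [hgdef] at h0
    norm_num [Fin.ext_iff, show ((0:Fin 6):ℕ) = 0 from rfl, show ((1:Fin 6):ℕ) = 1 from rfl, show ((2:Fin 6):ℕ) = 2 from rfl, show ((3:Fin 6):ℕ) = 3 from rfl, show ((4:Fin 6):ℕ) = 4 from rfl, show ((5:Fin 6):ℕ) = 5 from rfl] at h0
    have h3 : (3:ℝ) * (z 0 : ℝ) = -8 := by rw [h0]; norm_num
    have h4 : (3 * z 0 : ℤ) = -8 := by exact_mod_cast h3
    omega
  · -- τ = π₀
    intro i
    have := hτ i
    rw [hpi] at this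
    exact neg_eq_iff_eq_neg.mp this


def piE6 : Fin 6 → Fin 6 := ![5, 1, 4, 3, 2, 0]

lemma piE6_iff : ∀ i j, piE6 i = piE6 j ↔ i = j := by decide
lemma piE6_adj : ∀ i j, adjF (piE6 i) (piE6 j) ↔ adjF i j := by decide
lemma piE6_invol : ∀ i, piE6 (piE6 i) = i := by decide

lemma piE6_bij : Function.Bijective piE6 :=
  Function.Involutive.bijective piE6_invol

lemma cartanE_piE6 (i j : Fin 6) :
    cartanE ((piE6 i : ℕ) + 1) ((piE6 j : ℕ) + 1) = cartanE ((i:ℕ) + 1) ((j:ℕ) + 1) := by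
  by_cases hij : i = j
  · subst hij
    rw [cartanE, cartanE, if_pos rfl, if_pos rfl]
  · have h1 : ((piE6 i : ℕ) + 1) ≠ ((piE6 j : ℕ) + 1) := by
      intro h
      exact hij ((piE6_iff i j).mp (Fin.val_injective (by omega)))
    have h2 : ((i:ℕ) + 1) ≠ ((j:ℕ) + 1) := fun h => hij (Fin.val_injective (by omega))
    by_cases ha : adjF i j
    · rw [cartanE_of_adj h1 ((piE6_adj i j).mpr ha), cartanE_of_adj h2 ha]
    · rw [cartanE_of_nadj h1 (fun hc => ha ((piE6_adj i j).mp hc)), cartanE_of_nadj h2 ha]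

theorem statement3' (Φ : Set V) (hΦ : IsRootSystem Φ)
    (αs : Fin 6 → V) (Pos : Set V) (hbase : IsBase Φ αs Pos)
    (hE : CartanIs αs cartanE)
    (w₀ : V ≃ₗ[ℝ] V) (hw₀mem : w₀ ∈ weylGroup Φ) (hw₀ : ∀ γ ∈ Pos, -(w₀ γ) ∈ Pos)
    (σ : V →ₗ[ℝ] V) (hσinv : σ ∘ₗ σ = LinearMap.id)
    (hσ : ∀ i, σ (αs i) = αs (![5, 1, 4, 3, 2, 0] i))
    (β : Fin 4 → V) (hβ : ∀ k, β k ∈ Pos)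
    (horth : ∀ k l, k ≠ l → ⟪β k, β l⟫ = 0)
    (hfix : ∀ k, σ (β k) = β k) :
    (List.ofFn fun k => sref (β k)).prod = w₀ := by
  classical
  have hσ' : ∀ i, σ (αs i) = αs (piE6 i) := hσ
  have hσσ : ∀ v, σ (σ v) = v := fun v => by
    have := LinearMap.ext_iff.mp hσinv v
    simpa using this
  have hw0 : ∀ i, w₀ (αs i) = -αs (piE6 i) := w0_neg_sigma hΦ hbase hE w₀ hw₀mem hw₀
  have hsp : ⊤ ≤ Submodule.span ℝ (Set.range αs) := le_of_eq hbase.span_eq.symm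
  let B : Module.Basis (Fin 6) ℝ V := Module.Basis.mk hbase.indep hsp
  have hB : ∀ i, B i = αs i := fun i => by rw [Module.Basis.mk_apply]
  have hFD : FiniteDimensional ℝ V := Module.Finite.of_basis B
  have hval := inner_simple hΦ hbase hE
  -- σ is an isometry
  have keyσ : ∀ i j, ⟪σ (αs i), σ (αs j)⟫ = ⟪αs i, αs j⟫ := by
    intro i j
    rw [hσ' i, hσ' j, hval (piE6 i) (piE6 j), hval i j, cartanE_piE6]
  have hσiso : ∀ x y, ⟪σ x, σ y⟫ = ⟪x, y⟫ := by
    intro x y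
    have hx := B.sum_repr x
    have hy := B.sum_repr y
    rw [← hx, ← hy]
    rw [map_sum, map_sum]
    simp only [map_smul, hB]
    rw [sum_inner, sum_inner]
    apply Finset.sum_congr rfl
    intro i _
    rw [real_inner_smul_left, real_inner_smul_left, inner_sum, inner_sum]
    congr 1
    apply Finset.sum_congr rfl
    intro j _
    rw [real_inner_smul_right, real_inner_smul_right, keyσ]
  -- fixed vectors lie in the span U of the folded basis
  let u : Fin 4 → V := ![αs 0 + αs 5, αs 1, αs 2 + αs 4, αs 3]
  let U : Submodule ℝ V := Submodule.span ℝ (Set.range u)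
  have hfix_mem : ∀ v, σ v = v → v ∈ U := by
    intro v hv
    set a : Fin 6 → ℝ := fun i => B.repr v i with hadef
    have hvs : v = ∑ i, a i • αs i := by
      conv_lhs => rw [← B.sum_repr v]
      exact Finset.sum_congr rfl (fun i _ => by rw [hB])
    have hσv : σ v = ∑ i, a i • αs (piE6 i) := by
      rw [hvs, map_sum]
      exact Finset.sum_congr rfl (fun i _ => by rw [map_smul, hσ'])
    have hre : ∑ i, a i • αs (piE6 i) = ∑ i, a (piE6 i) • αs i := by
      apply Fintype.sum_bijective piE6 piE6_bij
      intro i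
      rw [piE6_invol]
    have hcu : ∀ i, a i = a (piE6 i) := by
      intro i
      have heq : ∑ i, a i • αs i = ∑ i, a (piE6 i) • αs i := by
        rw [← hre, ← hσv, ← hvs, hv]
      exact congrFun (coords_unique hbase heq) i
    have ha5 : a 5 = a 0 := by have := hcu 0; rw [this]; rfl
    have ha4 : a 4 = a 2 := by have := hcu 2; rw [this]; rfl
    have hvu : v = a 0 • u 0 + a 1 • u 1 + a 2 • u 2 + a 3 • u 3 := by
      rw [hvs, Fin.sum_univ_six, ha5, ha4]
      show _ = a 0 • (αs 0 + αs 5) + a 1 • αs 1 + a 2 • (αs 2 + αs 4) + a 3 • αs 3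
      module
    rw [hvu]
    have hmem : ∀ k : Fin 4, u k ∈ U := fun k => Submodule.subset_span ⟨k, rfl⟩
    exact Submodule.add_mem _ (Submodule.add_mem _ (Submodule.add_mem _
      (Submodule.smul_mem _ _ (hmem 0)) (Submodule.smul_mem _ _ (hmem 1)))
      (Submodule.smul_mem _ _ (hmem 2))) (Submodule.smul_mem _ _ (hmem 3))
  -- β is independent and spans U
  have hβΦ : ∀ k, β k ∈ Φ := fun k => hbase.pos_subset (hβ k)
  have hβ0 : ∀ k, β k ≠ 0 := fun k h => hΦ.nonzero (h ▸ hβΦ k)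
  have hβindep : LinearIndependent ℝ β := by
    rw [Fintype.linearIndependent_iff]
    intro c hc l
    have h1 : ⟪β l, ∑ k, c k • β k⟫ = 0 := by rw [hc, inner_zero_right]
    rw [inner_sum] at h1
    rw [Finset.sum_eq_single l] at h1
    · rw [real_inner_smul_right] at h1
      rcases mul_eq_zero.mp h1 with h | h
      · exact h
      · exact absurd h (inner_self_ne_zero.mpr (hβ0 l))
    · intro k _ hkl
      rw [real_inner_smul_right, horth l k (Ne.symm hkl), mul_zero]
    · intro h
      exact absurd (Finset.mem_univ l) h
  let S : Submodule ℝ V := Submodule.span ℝ (Set.range β)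
  have hSU : S ≤ U := by
    apply Submodule.span_le.mpr
    rintro x ⟨k, rfl⟩
    exact hfix_mem (β k) (hfix k)
  have hS4 : Module.finrank ℝ S = 4 := by
    rw [finrank_span_eq_card hβindep]
    simp
  have hU4 : Module.finrank ℝ U ≤ 4 := by
    have := finrank_range_le_card (R := ℝ) u
    rw [Set.finrank] at this
    simpa using this
  have hUS : S = U := Submodule.eq_of_le_of_finrank_le hSU (by rw [hS4]; exact hU4)
  -- the product w
  set w : V ≃ₗ[ℝ] V := (List.ofFn fun k => sref (β k)).prod with hwdef
  have hwapp : ∀ v, w v = sref (β 0) (sref (β 1) (sref (β 2) (sref (β 3) v))) := by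
    intro v
    rw [hwdef]
    simp only [List.ofFn_succ, List.prod_cons, List.ofFn_zero, List.prod_nil, mul_one]
    rfl
  have hwβ : ∀ k, w (β k) = -β k := by
    intro k
    rw [hwapp]
    fin_cases k
    · show sref (β 0) (sref (β 1) (sref (β 2) (sref (β 3) (β 0)))) = -β 0
      rw [sref_orth (β 3) (β 0) (horth 3 0 (by decide)),
        sref_orth (β 2) (β 0) (horth 2 0 (by decide)),
        sref_orth (β 1) (β 0) (horth 1 0 (by decide)), sref_apply_self]
    · show sref (β 0) (sref (β 1) (sref (β 2) (sref (β 3) (β 1)))) = -β 1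
      rw [sref_orth (β 3) (β 1) (horth 3 1 (by decide)),
        sref_orth (β 2) (β 1) (horth 2 1 (by decide)), sref_apply_self,
        map_neg, sref_orth (β 0) (β 1) (horth 0 1 (by decide))]
    · show sref (β 0) (sref (β 1) (sref (β 2) (sref (β 3) (β 2)))) = -β 2
      rw [sref_orth (β 3) (β 2) (horth 3 2 (by decide)), sref_apply_self,
        map_neg, sref_orth (β 1) (β 2) (horth 1 2 (by decide)),
        map_neg, sref_orth (β 0) (β 2) (horth 0 2 (by decide))]
    · show sref (β 0) (sref (β 1) (sref (β 2) (sref (β 3) (β 3)))) = -β 3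
      rw [sref_apply_self, map_neg, sref_orth (β 2) (β 3) (horth 2 3 (by decide)),
        map_neg, sref_orth (β 1) (β 3) (horth 1 3 (by decide)),
        map_neg, sref_orth (β 0) (β 3) (horth 0 3 (by decide))]
  have hwS : ∀ v ∈ S, w v = -v := by
    intro v hv
    induction hv using Submodule.span_induction with
    | mem x hx =>
      obtain ⟨k, rfl⟩ := hx
      exact hwβ k
    | zero => simp
    | add x y _ _ hx hy => rw [map_add, hx, hy]; abel
    | smul a x _ hx => rw [map_smul, hx, smul_neg]
  have hwfix : ∀ v, σ v = -v → w v = v := by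
    intro v hv
    have hperp : ∀ k, ⟪β k, v⟫ = 0 := by
      intro k
      have h1 : ⟪β k, v⟫ = ⟪σ (β k), σ v⟫ := (hσiso (β k) v).symm
      rw [hfix k, hv, inner_neg_right] at h1
      linarith
    rw [hwapp, sref_orth _ _ (hperp 3), sref_orth _ _ (hperp 2),
      sref_orth _ _ (hperp 1), sref_orth _ _ (hperp 0)]
  -- conclude on the basis
  apply LinearEquiv.toLinearMap_injective
  apply B.ext
  intro i
  show w (B i) = w₀ (B i)
  rw [hB]
  set p : V := ((1:ℝ)/2) • (αs i + σ (αs i)) with hpdef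
  set m : V := ((1:ℝ)/2) • (αs i - σ (αs i)) with hmdef
  have hpm : αs i = p + m := by rw [hpdef, hmdef]; module
  have hσp : σ p = p := by
    rw [hpdef, map_smul, map_add, hσσ, add_comm]
  have hσm : σ m = -m := by
    rw [hmdef, map_smul, map_sub, hσσ]
    module
  have hwp : w p = -p := hwS p (hUS ▸ hfix_mem p hσp)
  have hwm : w m = m := hwfix m hσm
  have hσai : σ (αs i) = p - m := by
    rw [hpm, map_add, hσp, hσm]
    abel
  calc w (αs i) = w p + w m := by rw [hpm, map_add]
  _ = -p + m := by rw [hwp, hwm]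
  _ = -(p - m) := by abel
  _ = -σ (αs i) := by rw [hσai]
  _ = w₀ (αs i) := by rw [hσ' i, ← hw0 i]

end Main


theorem statement3 (Φ : Set V) (hΦ : IsRootSystem Φ)
    (αs : Fin 6 → V) (Pos : Set V) (hbase : IsBase Φ αs Pos)
    (hE : CartanIs αs cartanE)
    (w₀ : V ≃ₗ[ℝ] V) (hw₀mem : w₀ ∈ weylGroup Φ) (hw₀ : ∀ γ ∈ Pos, -(w₀ γ) ∈ Pos)
    (σ : V →ₗ[ℝ] V) (hσinv : σ ∘ₗ σ = LinearMap.id)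
    (hσ : ∀ i, σ (αs i) = αs (![5, 1, 4, 3, 2, 0] i))
    (β : Fin 4 → V) (hβ : ∀ k, β k ∈ Pos)
    (horth : ∀ k l, k ≠ l → ⟪β k, β l⟫ = 0)
    (hfix : ∀ k, σ (β k) = β k) :
    (List.ofFn fun k => sref (β k)).prod = w₀ := by
  exact statement3' Φ hΦ αs Pos hbase hE w₀ hw₀mem hw₀ σ hσinv hσ β hβ horth hfix

end Paper
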